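/- (Continuity of the field-line angular velocity ω across a shock into a flowing disk region.) Let n, t, e_φ be vectors in ℝ³ with ‖e_φ‖ = 1, n · e_φ = 0 and t = n × e_φ. Let B, B̂ ∈ ℝ³ and χ, χ̂, w, ŵ ∈ ℝ. Suppose v = χ • B + w • e_φ and v̂ = χ̂ • B̂ + ŵ • e_φ, that (v × B) · t = (v̂ × B̂) · t, and that B · n = B̂ · n with B · n ≠ 0. Then ŵ = w; i.e., the streamline constant ω is continuous across the shock. -/

import Mathlib

open Matrix InnerProductSpace

/-- The cross product on `ℝ³`, viewed as `EuclideanSpace ℝ (Fin 3)`. -/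
noncomputable def cross3 (x y : EuclideanSpace ℝ (Fin 3)) : EuclideanSpace ℝ (Fin 3) :=
  WithLp.toLp 2 (crossProduct x y)

/-!
The field-aligned part of `v = χ B + w e_φ` drops out of `v × B`, so `v × B = w (e_φ × B)`.
By the Binet–Cauchy identity, `(e_φ × B) · (n × e_φ) = (e_φ · n)(B · e_φ) - (e_φ · e_φ)(B · n)`,
which is `-(B · n)` for a unit `e_φ` orthogonal to `n`. The jump condition thus reads
`w (B · n) = ŵ (B̂ · n)`, and continuity of the nonzero `B · n` gives `ŵ = w`.
-/

lemma EuclideanSpace.real_inner_eq_dotProduct {ι : Type*} [Fintype ι]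
    (x y : EuclideanSpace ℝ ι) : ⟪x, y⟫_ℝ = x.ofLp ⬝ᵥ y.ofLp := by
  simp [EuclideanSpace.inner_eq_star_dotProduct, dotProduct_comm]

lemma inner_cross3_cross3 (a b c d : EuclideanSpace ℝ (Fin 3)) :
    ⟪cross3 a b, cross3 c d⟫_ℝ = ⟪a, c⟫_ℝ * ⟪b, d⟫_ℝ - ⟪a, d⟫_ℝ * ⟪b, c⟫_ℝ := by
  simp only [EuclideanSpace.real_inner_eq_dotProduct, cross3]
  exact cross_dot_cross _ _ _ _

lemma cross3_smul_add_smul_left (χ w : ℝ) (B e : EuclideanSpace ℝ (Fin 3)) :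
    cross3 (χ • B + w • e) B = w • cross3 e B := by
  simp [cross3]

lemma inner_cross3_corotating_tangent {n e : EuclideanSpace ℝ (Fin 3)} (he : ‖e‖ = 1)
    (hne : ⟪n, e⟫_ℝ = 0) (B : EuclideanSpace ℝ (Fin 3)) (χ w : ℝ) :
    ⟪cross3 (χ • B + w • e) B, cross3 n e⟫_ℝ = -(w * ⟪B, n⟫_ℝ) := by
  rw [cross3_smul_add_smul_left, inner_smul_left, inner_cross3_cross3, real_inner_comm n e, hne,
    real_inner_self_eq_norm_sq, he]
  simp

/-- Continuity of the field-line angular velocity `ω` across a shock into a flowing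
(wind-compressed) disk region: with velocities of the field-aligned-plus-corotation
form `v = χ B + w e_φ` on both sides of the shock, the tangential electric-field jump
condition and continuity of the nonzero normal magnetic field component force the
streamline constant `w = ω r sinθ` to be continuous across the shock. -/
theorem omega_continuous_across_shock
    (n t ephi B Bhat v vhat : EuclideanSpace ℝ (Fin 3))
    (χ χhat w what : ℝ)
    (hnorm : ‖ephi‖ = 1)
    (hperp : ⟪n, ephi⟫_ℝ = 0)
    (ht : t = cross3 n ephi)
    (hv : v = χ • B + w • ephi)
    (hvhat : vhat = χhat • Bhat + what • ephi)
    (hjump : ⟪cross3 v B, t⟫_ℝ = ⟪cross3 vhat Bhat, t⟫_ℝ)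
    (hBn : ⟪B, n⟫_ℝ = ⟪Bhat, n⟫_ℝ)
    (hBn0 : ⟪B, n⟫_ℝ ≠ 0) :
    what = w := by
  subst ht hv hvhat
  rw [inner_cross3_corotating_tangent hnorm hperp, inner_cross3_corotating_tangent hnorm hperp,
    ← hBn, neg_inj] at hjump
  exact (mul_right_cancel₀ hBn0 hjump).symm
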